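/- Let $\Gamma$ be the subgraph of the grid $\mathbb{Z}^2$ obtained by removing the open central hole $H=\{(x,y): 3^{h-1} < x < 2\cdot 3^{h-1},\ 3^{h-1} < y < 2\cdot 3^{h-1}\}$ (its interior vertices and incident edges) from the grid on $[0,3^h]\times[0,3^h]$. Then for two vertices $u=(x_1,y_1)$ and $v=(x_2,y_2)$ with $x_1 \le 3^{h-1} \le 2\cdot 3^{h-1} \le x_2$ and $3^{h-1} < y_1, y_2 < 2\cdot 3^{h-1}$, if $\frac{y_1+y_2}{2} \geq \frac{3^h}{2}$ then $d_\Gamma(u,v) = \|u - D\|_1 + 3^{h-1} + \|C - v\|_1$ where $D=(3^{h-1}, 2\cdot 3^{h-1})$ and $C=(2\cdot 3^{h-1}, 2\cdot 3^{h-1})$. -/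

import Mathlib

/-!
Write `M = 3^(h-1)`. Going up the column of `u` to the top row `2M` of the hole, along that row,
and down to `v` is a walk of length `x₂ - x₁ + (2M - y₁) + (2M - y₂)`, which is the right-hand
side. Conversely, every step of a walk changes the `ℓ¹` position by one, so a walk is at least
as long as the `ℓ¹` distance through any of its vertices, and it must cross the column `M + 1`
outside the hole, at a height `q ≤ M` or `q ≥ 2M`. Crossing above costs at least
`x₂ - x₁ + (2q - y₁ - y₂) ≥ x₂ - x₁ + (4M - y₁ - y₂)`; crossing below costs at least
`x₂ - x₁ + (y₁ + y₂ - 2q)`, which is no smaller because `y₁ + y₂ ≥ 3M`.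
-/

/-- ℓ¹ distance on ℤ². -/
def l1 (u v : ℤ × ℤ) : ℕ := (u.1 - v.1).natAbs + (u.2 - v.2).natAbs

/-- A point of the box `[0,3^h]²` which is not interior to the central hole
`(3^{h-1}, 2·3^{h-1})²`. -/
def holedOk (h : ℕ) (p : ℤ × ℤ) : Prop :=
  0 ≤ p.1 ∧ p.1 ≤ 3 ^ h ∧ 0 ≤ p.2 ∧ p.2 ≤ 3 ^ h ∧
  ¬ ((3:ℤ) ^ (h - 1) < p.1 ∧ p.1 < 2 * 3 ^ (h - 1) ∧
     (3:ℤ) ^ (h - 1) < p.2 ∧ p.2 < 2 * 3 ^ (h - 1))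

/-- The grid graph on `[0,3^h]²` with the interior of the central hole removed. -/
def holedGraph (h : ℕ) : SimpleGraph (ℤ × ℤ) where
  Adj u v := holedOk h u ∧ holedOk h v ∧ l1 u v = 1
  symm := ⟨by rintro u v ⟨h1, h2, h3⟩; exact ⟨h2, h1, by unfold l1 at *; omega⟩⟩
  loopless := ⟨by rintro u ⟨-, -, h⟩; unfold l1 at h; omega⟩

open SimpleGraph

theorem exists_walk_length_eq_of_adj_succ {V : Type*} {G : SimpleGraph V} (γ : ℤ → V) {m n : ℤ}
    (hmn : m ≤ n) (hadj : ∀ k, m ≤ k → k < n → G.Adj (γ k) (γ (k + 1))) :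
    ∃ w : G.Walk (γ m) (γ n), w.length = (n - m).toNat := by
  induction n, hmn using Int.leInduction with
  | base => exact ⟨Walk.nil, by simp⟩
  | succ n hmn ih =>
    obtain ⟨w, hw⟩ := ih fun k hk hkn => hadj k hk (by omega)
    exact ⟨w.concat (hadj n hmn (by omega)), by rw [Walk.length_concat, hw]; omega⟩

section UnitSteps

variable {G : SimpleGraph (ℤ × ℤ)}

theorem l1_le_walk_length (hG : ∀ ⦃u v⦄, G.Adj u v → l1 u v ≤ 1) {a b : ℤ × ℤ}
    (w : G.Walk a b) : l1 a b ≤ w.length := by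
  induction w with
  | nil => simp [l1]
  | cons hadj _ ih =>
    have hstep := hG hadj
    rw [Walk.length_cons]
    unfold l1 at *
    omega

theorem l1_add_l1_le_walk_length (hG : ∀ ⦃u v⦄, G.Adj u v → l1 u v ≤ 1) {a b p : ℤ × ℤ}
    (w : G.Walk a b) (hp : p ∈ w.support) : l1 a p + l1 p b ≤ w.length := by
  have hsplit := congrArg Walk.length (w.take_spec hp)
  rw [Walk.length_append] at hsplit
  rw [← hsplit]
  exact add_le_add (l1_le_walk_length hG _) (l1_le_walk_length hG _)

theorem exists_mem_support_fst_eq (hG : ∀ ⦃u v⦄, G.Adj u v → l1 u v ≤ 1) {a b : ℤ × ℤ}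
    (w : G.Walk a b) {c : ℤ} (hac : a.1 ≤ c) (hcb : c ≤ b.1) : ∃ p ∈ w.support, p.1 = c := by
  induction w with
  | nil => exact ⟨_, Walk.start_mem_support _, by omega⟩
  | @cons u v _ hadj w ih =>
    rcases hac.eq_or_lt with rfl | hlt
    · exact ⟨u, Walk.start_mem_support _, rfl⟩
    · have hstep := hG hadj
      unfold l1 at hstep
      obtain ⟨p, hp, hpc⟩ := ih (by omega) hcb
      exact ⟨p, by simp [hp], hpc⟩

end UnitSteps

section HoledGraph

variable {h : ℕ}

theorem holedOk_iff (hh : 1 ≤ h) (p : ℤ × ℤ) :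
    holedOk h p ↔ 0 ≤ p.1 ∧ p.1 ≤ 3 * 3 ^ (h - 1) ∧ 0 ≤ p.2 ∧ p.2 ≤ 3 * 3 ^ (h - 1) ∧
      (p.1 ≤ 3 ^ (h - 1) ∨ 2 * 3 ^ (h - 1) ≤ p.1 ∨ p.2 ≤ 3 ^ (h - 1) ∨ 2 * 3 ^ (h - 1) ≤ p.2) := by
  unfold holedOk
  rw [← mul_pow_sub_one (by omega : h ≠ 0)]
  omega

theorem holedGraph_adj_l1_le_one : ∀ ⦃u v⦄, (holedGraph h).Adj u v → l1 u v ≤ 1 :=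
  fun _ _ huv => huv.2.2.le

theorem holedOk_of_mem_support {u v p : ℤ × ℤ} (w : (holedGraph h).Walk u v) (hu : holedOk h u)
    (hp : p ∈ w.support) : holedOk h p := by
  induction w with
  | nil =>
    rw [Walk.support_nil, List.mem_singleton] at hp
    rwa [hp]
  | cons hadj w ih =>
    rcases List.mem_cons.mp hp with rfl | hp
    · exact hu
    · exact ih hadj.2.1 hp

theorem exists_mem_support_above_or_below_hole {u v : ℤ × ℤ} (w : (holedGraph h).Walk u v)
    (hu : holedOk h u) (hM : (2 : ℤ) ≤ 3 ^ (h - 1)) (hul : u.1 ≤ 3 ^ (h - 1))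
    (hvr : 2 * 3 ^ (h - 1) ≤ v.1) :
    ∃ q ∈ w.support, q.2 ≤ 3 ^ (h - 1) ∨ 2 * 3 ^ (h - 1) ≤ q.2 := by
  obtain ⟨q, hq, hq1⟩ := exists_mem_support_fst_eq holedGraph_adj_l1_le_one w
    (c := 3 ^ (h - 1) + 1) (by omega) (by omega)
  have hq_not_in_hole := (holedOk_of_mem_support w hu hq).2.2.2.2
  exact ⟨q, hq, by omega⟩

theorem exists_walk_over_hole (hh : 1 ≤ h) {x₁ y₁ x₂ y₂ : ℤ}
    (hu : holedOk h (x₁, y₁)) (hv : holedOk h (x₂, y₂))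
    (hx₁ : x₁ ≤ 3 ^ (h - 1)) (hx₂ : 2 * 3 ^ (h - 1) ≤ x₂)
    (hy₁ : y₁ ≤ 2 * 3 ^ (h - 1)) (hy₂ : y₂ ≤ 2 * 3 ^ (h - 1)) :
    ∃ w : (holedGraph h).Walk (x₁, y₁) (x₂, y₂), w.length =
      (2 * 3 ^ (h - 1) - y₁).toNat + (x₂ - x₁).toNat + (2 * 3 ^ (h - 1) - y₂).toNat := by
  rw [holedOk_iff hh] at hu hv
  dsimp only at hu hv
  obtain ⟨wl, hwl⟩ := exists_walk_length_eq_of_adj_succ (G := holedGraph h) (fun z => (x₁, z))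
    hy₁ fun z _ _ => by simp only [holedGraph, holedOk_iff hh, l1]; omega
  obtain ⟨wt, hwt⟩ := exists_walk_length_eq_of_adj_succ (G := holedGraph h)
    (fun z => (z, 2 * 3 ^ (h - 1))) (by omega : x₁ ≤ x₂)
    fun z _ _ => by simp only [holedGraph, holedOk_iff hh, l1]; omega
  obtain ⟨wr, hwr⟩ := exists_walk_length_eq_of_adj_succ (G := holedGraph h) (fun z => (x₂, z))
    hy₂ fun z _ _ => by simp only [holedGraph, holedOk_iff hh, l1]; omega
  exact ⟨wl.append (wt.append wr.reverse), by simp [hwl, hwt, hwr]; omega⟩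

end HoledGraph

theorem holed_dist_formula_general (h : ℕ) (hh : 1 ≤ h) (x₁ y₁ x₂ y₂ : ℤ)
    (hu : holedOk h (x₁, y₁)) (hv : holedOk h (x₂, y₂))
    (hx₁ : x₁ ≤ 3 ^ (h - 1)) (hx₂ : 2 * 3 ^ (h - 1) ≤ x₂)
    (hy₁r : y₁ < 2 * 3 ^ (h - 1))
    (hy₂r : y₂ < 2 * 3 ^ (h - 1))
    (havg : (3:ℤ) ^ h ≤ y₁ + y₂) :
    (holedGraph h).dist (x₁, y₁) (x₂, y₂) =
      l1 (x₁, y₁) (3 ^ (h - 1), 2 * 3 ^ (h - 1)) + 3 ^ (h - 1) +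
        l1 (2 * 3 ^ (h - 1), 2 * 3 ^ (h - 1)) (x₂, y₂) := by
  rw [← mul_pow_sub_one (by omega : h ≠ 0)] at havg
  obtain ⟨w, hw⟩ := exists_walk_over_hole hh hu hv hx₁ hx₂ hy₁r.le hy₂r.le
  have hupper := dist_le w
  obtain ⟨p, hp⟩ := (Walk.reachable w).exists_walk_length_eq_dist
  obtain ⟨q, hq, hq_out⟩ := exists_mem_support_above_or_below_hole p hu (by omega) hx₁ hx₂
  have hlower := l1_add_l1_le_walk_length holedGraph_adj_l1_le_one p hq
  rw [hp] at hlower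
  have hcast : ((3 ^ (h - 1) : ℕ) : ℤ) = 3 ^ (h - 1) := by push_cast; rfl
  simp only [l1] at hlower ⊢
  omega

/-- Case II distance formula: for `u` on the left of the hole and `v` on the right,
both at heights strictly inside the hole's vertical range, with average height at least
`3^h / 2`, the geodesic goes through the top corners `D` and `C` of the hole. -/
theorem holed_dist_formula (h : ℕ) (hh : 1 ≤ h) (x₁ y₁ x₂ y₂ : ℤ)
    (hu : holedOk h (x₁, y₁)) (hv : holedOk h (x₂, y₂))
    (hx₁ : x₁ ≤ 3 ^ (h - 1)) (hx₂ : 2 * 3 ^ (h - 1) ≤ x₂)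
    (hy₁l : (3:ℤ) ^ (h - 1) < y₁) (hy₁r : y₁ < 2 * 3 ^ (h - 1))
    (hy₂l : (3:ℤ) ^ (h - 1) < y₂) (hy₂r : y₂ < 2 * 3 ^ (h - 1))
    (havg : (3:ℤ) ^ h ≤ y₁ + y₂) :
    (holedGraph h).dist (x₁, y₁) (x₂, y₂) =
      l1 (x₁, y₁) (3 ^ (h - 1), 2 * 3 ^ (h - 1)) + 3 ^ (h - 1) +
        l1 (2 * 3 ^ (h - 1), 2 * 3 ^ (h - 1)) (x₂, y₂) :=
  holed_dist_formula_general h hh x₁ y₁ x₂ y₂ hu hv hx₁ hx₂ hy₁r hy₂r havg
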